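/- For all b ≥ 2, all ℓ ≥ 0, and all x ∈ {1,...,b−1}, the summatory function satisfies A_b(x·b^ℓ) = (2x−1)·(2b−1)^ℓ. -/

import Mathlib

/-- Number of distinct words in `L_b` (no leading zero, or empty) occurring as
scattered subwords (subsequences) of `u`. -/
def lbCount (u : List ℕ) : ℕ :=
  ((u.sublists.filter (fun v => v.head? ≠ some 0)).dedup).length

/-- `S_b(n)`: number of distinct words of `L_b` occurring as scattered subwords of
the base-`b` expansion of `n` (most significant digit first, `rep_b(0) = ε`). -/
def Sb (b n : ℕ) : ℕ := lbCount ((Nat.digits b n).reverse)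

/-- Summatory function `A_b(n) = ∑_{j<n} S_b(j)`. -/
def Asum (b n : ℕ) : ℕ := ∑ j ∈ Finset.range n, Sb b j


/-!
The `L_b`-subwords of `u ++ [r]` are those of `u` together with the words `v ++ [r]` for `v` an
`L_b`-subword of `u` (with `v ≠ []` when `r = 0`); the two families overlap exactly in the subwords
of `u` ending in `r`. Summing over the `b` letters, the overlaps count every nonempty subword of
`u` once, so `∑_r S(u ++ [r]) = b S(u) + (b S(u) - 1) - (S(u) - 1) = (2b - 1) S(u)`. As the
numbers in `[qb, qb + b)` are written `rep_b q ++ [r]`, this gives `A_b(nb) = (2b - 1) A_b(n)`,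
while `A_b(x) = 2x - 1` for `1 ≤ x ≤ b` since `S_b(0) = 1` and `S_b(d) = 2` for a single digit `d`.
-/

open Finset

def lbSubwords (u : List ℕ) : Finset (List ℕ) :=
  {v ∈ u.sublists.toFinset | v.head? ≠ some 0}

theorem mem_lbSubwords {u v : List ℕ} : v ∈ lbSubwords u ↔ v.Sublist u ∧ v.head? ≠ some 0 := by
  simp [lbSubwords, List.mem_sublists]

theorem nil_mem_lbSubwords (u : List ℕ) : [] ∈ lbSubwords u := by
  simp [mem_lbSubwords]

theorem lbCount_eq_card_lbSubwords (u : List ℕ) : lbCount u = #(lbSubwords u) := by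
  rw [lbCount, lbSubwords, ← List.card_toFinset]
  congr 1
  ext v
  simp [List.mem_sublists]

theorem head?_append_singleton_ne_zero {v : List ℕ} {r : ℕ} (hv : v.head? ≠ some 0) :
    (v ++ [r]).head? ≠ some 0 ↔ v ≠ [] ∨ r ≠ 0 := by
  cases v <;> simp_all

theorem lbSubwords_append_singleton (u : List ℕ) (r : ℕ) :
    lbSubwords (u ++ [r]) =
      lbSubwords u ∪ {v ∈ lbSubwords u | v ≠ [] ∨ r ≠ 0}.image (· ++ [r]) := by
  ext w
  simp only [mem_union, mem_image, mem_filter, mem_lbSubwords]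
  constructor
  · rintro ⟨hw, hw0⟩
    obtain ⟨v, s, rfl, hv, hs⟩ := List.sublist_append_iff.1 hw
    rcases List.sublist_singleton.1 hs with rfl | rfl
    · exact .inl ⟨by simpa using hv, by simpa using hw0⟩
    · have hv0 : v.head? ≠ some 0 := by cases v <;> simp_all
      exact .inr ⟨v, ⟨⟨hv, hv0⟩, (head?_append_singleton_ne_zero hv0).1 hw0⟩, rfl⟩
  · rintro (⟨hw, hw0⟩ | ⟨v, ⟨⟨hv, hv0⟩, hvr⟩, rfl⟩)
    · exact ⟨hw.trans (List.sublist_append_left u [r]), hw0⟩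
    · exact ⟨hv.append (List.Sublist.refl [r]), (head?_append_singleton_ne_zero hv0).2 hvr⟩

theorem lbSubwords_inter_image_append_singleton (u : List ℕ) (r : ℕ) :
    lbSubwords u ∩ {v ∈ lbSubwords u | v ≠ [] ∨ r ≠ 0}.image (· ++ [r]) =
      {w ∈ lbSubwords u | w.getLast? = some r} := by
  ext w
  simp only [mem_inter, mem_image, mem_filter, mem_lbSubwords]
  constructor
  · rintro ⟨hw, v, -, rfl⟩
    exact ⟨hw, List.getLast?_concat⟩
  · rintro ⟨⟨hw, hw0⟩, hlast⟩
    obtain ⟨v, rfl⟩ : ∃ v, w = v ++ [r] := List.getLast?_eq_some_iff.1 hlast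
    have hv0 : v.head? ≠ some 0 := by cases v <;> simp_all
    exact ⟨⟨hw, hw0⟩, v, ⟨⟨(List.sublist_append_left v [r]).trans hw, hv0⟩,
      (head?_append_singleton_ne_zero hv0).1 hw0⟩, rfl⟩

theorem card_filter_lbSubwords_ne_nil_or_ne_zero (u : List ℕ) (r : ℕ) :
    #{v ∈ lbSubwords u | v ≠ [] ∨ r ≠ 0} + (if r = 0 then 1 else 0) = #(lbSubwords u) := by
  split_ifs with hr
  · simp only [hr, ne_eq, not_true_eq_false, or_false, filter_ne']
    exact card_erase_add_one (nil_mem_lbSubwords u)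
  · simp [hr]

theorem sum_card_getLast?_eq_some_add_card_getLast?_eq_none {b : ℕ} (s : Finset (List ℕ))
    (hs : ∀ w ∈ s, ∀ d ∈ w, d < b) :
    ∑ r ∈ range b, #{w ∈ s | w.getLast? = some r} + #{w ∈ s | w.getLast? = none} = #s := by
  have hmaps : ∀ w ∈ s, w.getLast? ∈ insert none ((range b).map .some) := by
    intro w hw
    cases hlast : w.getLast? with
    | none => simp
    | some d => simpa using hs w hw d (List.mem_of_getLast? hlast)
  rw [card_eq_sum_card_fiberwise hmaps, sum_insert (by simp), sum_map, add_comm]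
  rfl

theorem card_lbSubwords_append_singleton_add (u : List ℕ) (r : ℕ) :
    #(lbSubwords (u ++ [r])) + #{w ∈ lbSubwords u | w.getLast? = some r} +
      (if r = 0 then 1 else 0) = 2 * #(lbSubwords u) := by
  have hunion := card_union_add_card_inter (lbSubwords u)
    ({v ∈ lbSubwords u | v ≠ [] ∨ r ≠ 0}.image (· ++ [r]))
  rw [← lbSubwords_append_singleton, lbSubwords_inter_image_append_singleton,
    card_image_of_injective _ (List.append_left_injective [r])] at hunion
  have := card_filter_lbSubwords_ne_nil_or_ne_zero u r
  omega

theorem sum_lbCount_append_singleton {b : ℕ} (hb : 1 ≤ b) {u : List ℕ} (hu : ∀ d ∈ u, d < b) :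
    ∑ r ∈ range b, lbCount (u ++ [r]) = (2 * b - 1) * lbCount u := by
  have hsum := sum_congr rfl fun r (_ : r ∈ range b) => card_lbSubwords_append_singleton_add u r
  rw [sum_add_distrib, sum_add_distrib, sum_ite_eq' (range b) 0, if_pos (by simpa),
    sum_const, card_range, smul_eq_mul] at hsum
  have hfib := sum_card_getLast?_eq_some_add_card_getLast?_eq_none (b := b) (lbSubwords u)
    fun w hw d hd => hu d ((mem_lbSubwords.1 hw).1.subset hd)
  have hnil : #{w ∈ lbSubwords u | w.getLast? = none} = 1 := by
    rw [card_eq_one]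
    refine ⟨[], ?_⟩
    ext w
    simpa [List.getLast?_eq_none_iff] using fun h => h ▸ nil_mem_lbSubwords u
  rw [mul_left_comm, ← mul_assoc] at hsum
  simp only [lbCount_eq_card_lbSubwords]
  rw [Nat.sub_mul, one_mul]
  omega

theorem Sb_mul_add {b : ℕ} (hb : 2 ≤ b) (q : ℕ) {r : ℕ} (hr : r < b) :
    Sb b (q * b + r) = lbCount ((Nat.digits b q).reverse ++ [r]) := by
  by_cases h0 : r = 0 ∧ q = 0
  -- `rep_b 0` is empty rather than `[0]`; both have only the empty word as `L_b`-subword.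
  · obtain ⟨rfl, rfl⟩ := h0
    simp only [Sb, zero_mul, add_zero, Nat.digits_zero, List.reverse_nil, List.nil_append]
    decide
  · rw [Sb, add_comm, mul_comm, Nat.digits_add b hb r q hr (not_and_or.1 h0), List.reverse_cons]

theorem sum_Sb_mul_add {b : ℕ} (hb : 2 ≤ b) (q : ℕ) :
    ∑ r ∈ range b, Sb b (q * b + r) = (2 * b - 1) * Sb b q := by
  rw [sum_congr rfl fun r hr => Sb_mul_add hb q (mem_range.1 hr), Sb]
  exact sum_lbCount_append_singleton (by omega)
    fun d hd => Nat.digits_lt_base hb (List.mem_reverse.1 hd)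

theorem Asum_succ (b n : ℕ) : Asum b (n + 1) = Asum b n + Sb b n :=
  sum_range_succ _ _

theorem Asum_mul {b : ℕ} (hb : 2 ≤ b) (n : ℕ) : Asum b (n * b) = (2 * b - 1) * Asum b n := by
  induction n with
  | zero => simp [Asum]
  | succ n ih =>
    rw [Asum, add_one_mul, sum_range_add, ← Asum, ih, sum_Sb_mul_add hb, Asum_succ, mul_add]

theorem Asum_mul_pow {b : ℕ} (hb : 2 ≤ b) (n ℓ : ℕ) :
    Asum b (n * b ^ ℓ) = (2 * b - 1) ^ ℓ * Asum b n := by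
  induction ℓ with
  | zero => simp
  | succ ℓ ih =>
    rw [pow_succ, ← mul_assoc, Asum_mul hb, ih, pow_succ, mul_comm _ (2 * b - 1), mul_assoc]

theorem Sb_zero (b : ℕ) : Sb b 0 = 1 := by
  rw [Sb, Nat.digits_zero]
  rfl

theorem Sb_of_pos_of_lt {b x : ℕ} (hx : 0 < x) (hxb : x < b) : Sb b x = 2 := by
  rw [Sb, Nat.digits_of_lt b x hx.ne' hxb]
  simp [lbCount, List.sublists, hx.ne']

theorem Asum_succ_of_lt {b x : ℕ} (hxb : x < b) : Asum b (x + 1) = 2 * x + 1 := by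
  rw [Asum, sum_range_succ', sum_congr rfl fun j hj =>
    Sb_of_pos_of_lt j.succ_pos (lt_of_le_of_lt (mem_range.1 hj) hxb), sum_const, card_range,
    smul_eq_mul, Sb_zero, mul_comm]

theorem stmt14 (b ℓ x : ℕ) (hb : 2 ≤ b) (hx : 1 ≤ x) (hxb : x < b) :
    Asum b (x * b ^ ℓ) = (2 * x - 1) * (2 * b - 1) ^ ℓ := by
  obtain ⟨y, rfl⟩ := Nat.exists_eq_add_of_le' hx
  rw [Asum_mul_pow hb, Asum_succ_of_lt (by omega : y < b), mul_comm,
    show 2 * (y + 1) - 1 = 2 * y + 1 by omega]
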